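/- Let (A, μ, α, β) be a BiHom-commutative BiHom-associative algebra, ξ, ζ, ι: A → A algebra maps, and 𝔇: A → A a λ-(ξ,ξ)-derivation, such that any two of α, β, ξ, ζ, ι, 𝔇 commute. Define a * b := ζ(a)·ι𝔇(b). Then (A, *, ζα, ιβξ) is a BiHom-pre-Lie algebra. -/
import Mathlib


/-- (Left) BiHom-pre-Lie algebra `(A, c, α, β)`. -/
def BHPreLie {K A : Type*} [Field K] [AddCommGroup A] [Module K A]
    (c : A →ₗ[K] A →ₗ[K] A) (α β : A →ₗ[K] A) : Prop :=
  (∀ a, α (β a) = β (α a)) ∧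
  (∀ a b, α (c a b) = c (α a) (α b)) ∧
  (∀ a b, β (c a b) = c (β a) (β b)) ∧
  (∀ a b x, c (α (β a)) (c (α b) x) - c (c (β a) (α b)) (β x) =
    c (α (β b)) (c (α a) x) - c (c (β b) (α a)) (β x))

/-- BiHom-Novikov algebra: BiHom-pre-Lie plus `(a*β(b))*αβ(c) = (a*β(c))*αβ(b)`. -/
def BHNovikov {K A : Type*} [Field K] [AddCommGroup A] [Module K A]
    (c : A →ₗ[K] A →ₗ[K] A) (α β : A →ₗ[K] A) : Prop :=
  BHPreLie c α β ∧
  (∀ a b x, c (c a (β b)) (α (β x)) = c (c a (β x)) (α (β b)))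

/-- BiHom-pre-Lie bimodule over a BiHom-pre-Lie algebra `(A, c, α, β)`. -/
def BHPreLieBimod {K A M : Type*} [Field K] [AddCommGroup A] [Module K A]
    [AddCommGroup M] [Module K M]
    (c : A →ₗ[K] A →ₗ[K] A) (α β : A →ₗ[K] A)
    (cl : A →ₗ[K] M →ₗ[K] M) (cr : M →ₗ[K] A →ₗ[K] M)
    (αM βM : M →ₗ[K] M) : Prop :=
  (∀ m, αM (βM m) = βM (αM m)) ∧
  (∀ a m, αM (cl a m) = cl (α a) (αM m)) ∧
  (∀ m a, αM (cr m a) = cr (αM m) (α a)) ∧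
  (∀ a m, βM (cl a m) = cl (β a) (βM m)) ∧
  (∀ m a, βM (cr m a) = cr (βM m) (β a)) ∧
  (∀ a b m, cl (α (β a)) (cl (α b) m) - cl (c (β a) (α b)) (βM m) =
    cl (α (β b)) (cl (α a) m) - cl (c (β b) (α a)) (βM m)) ∧
  (∀ a m x, cl (α (β a)) (cr (αM m) x) - cr (cl (β a) (αM m)) (β x) =
    cr (αM (βM m)) (c (α a) x) - cr (cr (βM m) (α a)) (β x))

/-- for a BiHom-commutative BiHom-associative algebra with algebra maps
`ξ, ζ, ι` and a `lam`-`(ξ,ξ)`-derivation `D` (all pairwise commuting), the product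
`a * b = ζ(a)·ι(D(b))` makes `(A, *, ζα, ιβξ)` a BiHom-pre-Lie algebra. -/
theorem stmt9 (K A : Type*) [Field K] [AddCommGroup A] [Module K A] (lam : K)
    (μ : A →ₗ[K] A →ₗ[K] A) (α β ξ ζ ι D : A →ₗ[K] A)
    -- `(A, μ, α, β)` is a BiHom-commutative BiHom-associative algebra
    (hαmul : ∀ a b, α (μ a b) = μ (α a) (α b))
    (hβmul : ∀ a b, β (μ a b) = μ (β a) (β b))
    (hassoc : ∀ a b c, μ (α a) (μ b c) = μ (μ a b) (β c))
    (hcommut : ∀ a b, μ (β a) (α b) = μ (β b) (α a))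
    -- `ξ, ζ, ι` are algebra maps
    (hξ : ∀ a b, ξ (μ a b) = μ (ξ a) (ξ b))
    (hζ : ∀ a b, ζ (μ a b) = μ (ζ a) (ζ b))
    (hι : ∀ a b, ι (μ a b) = μ (ι a) (ι b))
    -- `D` is a `lam`-`(ξ,ξ)`-derivation
    (hD : ∀ a b, D (μ a b) = μ (ξ a) (D b) + μ (D a) (ξ b) + lam • μ (ξ a) (ξ b))
    -- any two of `α, β, ξ, ζ, ι, D` commute
    (hpair : ∀ f ∈ ([α, β, ξ, ζ, ι, D] : List (A →ₗ[K] A)),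
      ∀ g ∈ ([α, β, ξ, ζ, ι, D] : List (A →ₗ[K] A)), ∀ a, f (g a) = g (f a))
    -- the new product
    (star : A →ₗ[K] A →ₗ[K] A)
    (hstar : ∀ a b, star a b = μ (ζ a) (ι (D b))) :
    BHPreLie star (ζ ∘ₗ α) (ι ∘ₗ β ∘ₗ ξ) := by
  -- individual commutation lemmas, oriented towards the normal order α β ξ ζ ι D
  have cβα : ∀ a, β (α a) = α (β a) := hpair β (by simp) α (by simp)
  have cξα : ∀ a, ξ (α a) = α (ξ a) := hpair ξ (by simp) α (by simp)
  have cξβ : ∀ a, ξ (β a) = β (ξ a) := hpair ξ (by simp) β (by simp)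
  have cζα : ∀ a, ζ (α a) = α (ζ a) := hpair ζ (by simp) α (by simp)
  have cζβ : ∀ a, ζ (β a) = β (ζ a) := hpair ζ (by simp) β (by simp)
  have cζξ : ∀ a, ζ (ξ a) = ξ (ζ a) := hpair ζ (by simp) ξ (by simp)
  have cια : ∀ a, ι (α a) = α (ι a) := hpair ι (by simp) α (by simp)
  have cιβ : ∀ a, ι (β a) = β (ι a) := hpair ι (by simp) β (by simp)
  have cιξ : ∀ a, ι (ξ a) = ξ (ι a) := hpair ι (by simp) ξ (by simp)
  have cιζ : ∀ a, ι (ζ a) = ζ (ι a) := hpair ι (by simp) ζ (by simp)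
  have cDα : ∀ a, D (α a) = α (D a) := hpair D (by simp) α (by simp)
  have cDβ : ∀ a, D (β a) = β (D a) := hpair D (by simp) β (by simp)
  have cDξ : ∀ a, D (ξ a) = ξ (D a) := hpair D (by simp) ξ (by simp)
  have cDζ : ∀ a, D (ζ a) = ζ (D a) := hpair D (by simp) ζ (by simp)
  have cDι : ∀ a, D (ι a) = ι (D a) := hpair D (by simp) ι (by simp)
  refine ⟨?_, ?_, ?_, ?_⟩
  · intro a
    simp only [LinearMap.coe_comp, Function.comp_apply,
      cβα, cξα, cξβ, cζα, cζβ, cζξ, cια, cιβ, cιξ, cιζ, cDα, cDβ, cDξ, cDζ, cDι]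
  · intro a b
    simp only [LinearMap.coe_comp, Function.comp_apply, hstar, hζ, hι, hξ, hαmul, hβmul,
      hD, map_add, map_smul,
      cβα, cξα, cξβ, cζα, cζβ, cζξ, cια, cιβ, cιξ, cιζ, cDα, cDβ, cDξ, cDζ, cDι]
  · intro a b
    simp only [LinearMap.coe_comp, Function.comp_apply, hstar, hζ, hι, hξ, hαmul, hβmul,
      hD, map_add, map_smul,
      cβα, cξα, cξβ, cζα, cζβ, cζξ, cια, cιβ, cιξ, cιζ, cDα, cDβ, cDξ, cDζ, cDι]
  · intro a b x
    simp only [LinearMap.coe_comp, Function.comp_apply, hstar, hζ, hι, hξ, hαmul, hβmul,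
      hD, map_add, map_smul,
      cβα, cξα, cξβ, cζα, cζβ, cζξ, cια, cιβ, cιξ, cιζ, cDα, cDβ, cDξ, cDζ, cDι,
      hassoc]
    rw [hcommut (ξ (ζ (ζ (ι a)))) (ξ (ζ (ζ (ι b))))]
    abel
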